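/- Let H be a finite-dimensional commutative semisimple C-algebra with a basis {c_λ} indexed by a finite poset Λ such that for every λ, the spans H^λ = span{c_μ : μ ≤ λ} and H^{λ-} = span{c_μ : μ < λ} are ideals of H. Then H has a complete set {e_λ : λ ∈ Λ} of primitive orthogonal idempotents such that the transition matrix from {c_λ} to {e_λ} is lower triangular: c_λ = Σ_{κ ≤ λ} A_{λκ} e_κ for some scalars A_{λκ}. -/

import Mathlib

/-!
Let `J κ` and `J' κ` be the ideals spanned by the `c_μ` with `μ ≤ κ` and `μ < κ`. In a
commutative semisimple ring every ideal is generated by an idempotent, so the difference of the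
generators of `J κ` and `J' κ` is a nonzero idempotent `e κ ∈ J κ` killing `J' κ`. For `κ ≰ λ`
the product `e κ * x` with `x ∈ J λ` lies in `J κ ⊓ J λ ⊆ J' κ`, hence vanishes. This makes the
`e κ` orthogonal, so they are `dim H` linearly independent vectors, i.e. a basis, and it also
shows that the coordinates of `c_λ` in this basis vanish outside `κ ≤ λ`.
-/

open Set Submodule

lemma IsSemisimpleRing.exists_isIdempotentElem_of_lt {R : Type*} [CommRing R]
    [IsSemisimpleRing R] {I' I : Ideal R} (h : I' < I) :
    ∃ e, IsIdempotentElem e ∧ e ∈ I ∧ e ≠ 0 ∧ ∀ x ∈ I', e * x = 0 := by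
  obtain ⟨f, hf, rfl⟩ := IsSemisimpleRing.ideal_eq_span_idempotent I
  obtain ⟨f', hf', rfl⟩ := IsSemisimpleRing.ideal_eq_span_idempotent I'
  have hff' : f * f' = f' := by
    obtain ⟨a, ha⟩ := Ideal.mem_span_singleton'.1 (h.le (Ideal.mem_span_singleton_self f'))
    rw [← ha, mul_left_comm, hf.eq]
  refine ⟨f - f', hf'.sub hf (by rw [mul_comm, hff']) hff',
    sub_mem (Ideal.mem_span_singleton_self f) (h.le (Ideal.mem_span_singleton_self f')),
    sub_ne_zero.2 fun hff => h.ne (by rw [hff]), fun x hx => ?_⟩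
  obtain ⟨a, rfl⟩ := Ideal.mem_span_singleton'.1 hx
  linear_combination a * hff' - a * hf'.eq

def Submodule.toIdealOfMulMem {K H : Type*} [Semiring K] [Semiring H] [Module K H]
    (p : Submodule K H) (hp : ∀ h, ∀ x ∈ p, h * x ∈ p) : Ideal H where
  carrier := p
  add_mem' := p.add_mem
  zero_mem' := p.zero_mem
  smul_mem' := hp

lemma OrthogonalIdempotents.linearIndependent {K R ι : Type*} [Field K] [Ring R] [Algebra K R]
    {e : ι → R} (he : OrthogonalIdempotents e) (hne : ∀ i, e i ≠ 0) : LinearIndependent K e := by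
  classical
  rw [linearIndependent_iff']
  intro s g hg i hi
  have hmul : e i * ∑ j ∈ s, g j • e j = g i • e i := by
    simp [Finset.mul_sum, he.mul_eq, hi]
  rw [hg, mul_zero] at hmul
  exact (smul_eq_zero.1 hmul.symm).resolve_right (hne i)

namespace Module.Basis

section OrthogonalIdempotents

variable {K R ι : Type*} [CommRing K] [Ring R] [Algebra K R] [Fintype ι] {eb : Basis ι K R}

lemma mul_eq_repr_smul_of_orthogonalIdempotents (he : OrthogonalIdempotents eb) (i : ι) (x : R) :
    eb i * x = eb.repr x i • eb i := by
  classical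
  calc eb i * x = eb i * ∑ j, eb.repr x j • eb j := by rw [eb.sum_repr]
    _ = eb.repr x i • eb i := by
      simp only [Finset.mul_sum, mul_smul_comm, he.mul_eq, smul_ite, smul_zero, Finset.sum_ite_eq,
        Finset.mem_univ, if_true]

lemma completeOrthogonalIdempotents (he : OrthogonalIdempotents eb) :
    CompleteOrthogonalIdempotents eb where
  toOrthogonalIdempotents := he
  complete := by
    conv_rhs => rw [← eb.sum_repr 1]
    simp_rw [← mul_eq_repr_smul_of_orthogonalIdempotents he, mul_one]

lemma mem_span_image_of_mul_eq_zero (he : OrthogonalIdempotents eb) {s : Set ι} {x : R}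
    (hx : ∀ i ∉ s, eb i * x = 0) : x ∈ span K (eb '' s) := by
  rw [eb.mem_span_image]
  intro i hi
  by_contra hs
  have hzero := congrArg (fun y => eb.repr y i)
    ((mul_eq_repr_smul_of_orthogonalIdempotents he i x).symm.trans (hx i hs))
  exact Finsupp.mem_support_iff.1 hi (by simpa using hzero)

end OrthogonalIdempotents

section Adapted

variable {K H Λ : Type*} [CommRing K] [CommRing H] [Algebra K H] [PartialOrder Λ]

structure IsAdaptedIdempotents (b : Basis Λ K H) (e : Λ → H) : Prop where
  idem : ∀ κ, IsIdempotentElem (e κ)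
  mem_span : ∀ κ, e κ ∈ span K (b '' Iic κ)
  mul_eq_zero : ∀ κ, ∀ x ∈ span K (b '' Iio κ), e κ * x = 0
  ne_zero : ∀ κ, e κ ≠ 0

theorem exists_isAdaptedIdempotents [Nontrivial K] [IsSemisimpleRing H] (b : Basis Λ K H)
    (hmul : ∀ κ, ∀ h, ∀ x ∈ span K (b '' Iic κ), h * x ∈ span K (b '' Iic κ))
    (hmul' : ∀ κ, ∀ h, ∀ x ∈ span K (b '' Iio κ), h * x ∈ span K (b '' Iio κ)) :
    ∃ e, b.IsAdaptedIdempotents e := by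
  have hlt : ∀ κ, (span K (b '' Iio κ)).toIdealOfMulMem (hmul' κ) <
      (span K (b '' Iic κ)).toIdealOfMulMem (hmul κ) := fun κ =>
    SetLike.lt_iff_le_and_exists.2 ⟨fun _ hx => span_mono (image_mono Iio_subset_Iic_self) hx,
      b κ, b.self_mem_span_image.2 le_rfl,
      fun h => lt_irrefl κ ((b.self_mem_span_image (s := Iio κ)).1 h)⟩
  choose e hidem hmem hne hzero using fun κ =>
    IsSemisimpleRing.exists_isIdempotentElem_of_lt (hlt κ)
  exact ⟨e, ⟨hidem, hmem, hzero, hne⟩⟩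

namespace IsAdaptedIdempotents

variable {b : Basis Λ K H} {e : Λ → H}

lemma mul_eq_zero_of_not_le (he : b.IsAdaptedIdempotents e)
    (hmul : ∀ κ, ∀ h, ∀ x ∈ span K (b '' Iic κ), h * x ∈ span K (b '' Iic κ))
    {κ lam : Λ} (h : ¬ κ ≤ lam) {x : H} (hx : x ∈ span K (b '' Iic lam)) : e κ * x = 0 := by
  have hκ : e κ * x ∈ span K (b '' Iic κ) := mul_comm x (e κ) ▸ hmul κ x _ (he.mem_span κ)
  have hlam : e κ * x ∈ span K (b '' Iic lam) := hmul lam _ x hx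
  have hlt : e κ * x ∈ span K (b '' Iio κ) := by
    rw [mem_span_image] at hκ hlam ⊢
    exact fun ν hν => (hκ hν).lt_of_ne fun hνκ => h (hνκ ▸ hlam hν)
  calc e κ * x = e κ * (e κ * x) := by rw [← mul_assoc, (he.idem κ).eq]
    _ = 0 := he.mul_eq_zero κ _ hlt

lemma orthogonalIdempotents (he : b.IsAdaptedIdempotents e)
    (hmul : ∀ κ, ∀ h, ∀ x ∈ span K (b '' Iic κ), h * x ∈ span K (b '' Iic κ)) :
    OrthogonalIdempotents e where
  idem := he.idem
  ortho κ lam hne := by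
    by_cases h : κ ≤ lam
    · show e κ * e lam = 0
      rw [mul_comm]
      exact he.mul_eq_zero_of_not_le hmul (fun h' => hne (le_antisymm h h')) (he.mem_span κ)
    · exact he.mul_eq_zero_of_not_le hmul h (he.mem_span lam)

end IsAdaptedIdempotents

end Adapted

end Module.Basis

/-- let `H` be a finite-dimensional commutative semisimple `ℂ`-algebra
with a basis `{c_λ}` indexed by a finite poset `Λ`, such that for every `λ` the spans
of `{c_μ : μ ≤ λ}` and of `{c_μ : μ < λ}` are ideals of `H`.  Then `H` has a complete
set of primitive (i.e. nonzero, pairwise orthogonal, summing to `1`) idempotents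
`{e_λ}` such that the transition matrix from `{c_λ}` to `{e_λ}` is lower triangular:
`c_λ ∈ span{e_κ : κ ≤ λ}` for every `λ`. -/
theorem idempotents_triangular (Λ : Type*) [Fintype Λ] [PartialOrder Λ]
    (H : Type*) [CommRing H] [Algebra ℂ H] [IsSemisimpleRing H] [FiniteDimensional ℂ H]
    (b : Module.Basis Λ ℂ H)
    (hideal : ∀ lam : Λ, ∀ h : H, ∀ x ∈ Submodule.span ℂ (⇑b '' {μ | μ ≤ lam}),
      h * x ∈ Submodule.span ℂ (⇑b '' {μ | μ ≤ lam}))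
    (hideal' : ∀ lam : Λ, ∀ h : H, ∀ x ∈ Submodule.span ℂ (⇑b '' {μ | μ < lam}),
      h * x ∈ Submodule.span ℂ (⇑b '' {μ | μ < lam})) :
    ∃ e : Λ → H,
      (∀ lam, IsIdempotentElem (e lam)) ∧
      (∀ lam mu, lam ≠ mu → e lam * e mu = 0) ∧
      (∑ lam, e lam) = 1 ∧
      (∀ lam, e lam ≠ 0) ∧
      (∀ lam, b lam ∈ Submodule.span ℂ (e '' {κ | κ ≤ lam})) := by
  obtain ⟨e, he⟩ := b.exists_isAdaptedIdempotents hideal hideal'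
  have hortho := he.orthogonalIdempotents hideal
  let eb := basisOfLinearIndependentOfCardEqFinrank' e (hortho.linearIndependent he.ne_zero)
    (Module.finrank_eq_card_basis b).symm
  have heb : ⇑eb = e := coe_basisOfLinearIndependentOfCardEqFinrank' ..
  rw [← heb] at hortho
  refine ⟨eb, hortho.idem, fun _ _ hne => hortho.ortho hne,
    (eb.completeOrthogonalIdempotents hortho).complete, heb ▸ he.ne_zero,
    fun lam => eb.mem_span_image_of_mul_eq_zero hortho fun κ hκ => ?_⟩
  rw [heb]
  exact he.mul_eq_zero_of_not_le hideal hκ (b.self_mem_span_image.2 le_rfl)
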